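/- arXiv:quant-ph/0206097 — 7 statements merged into one kernel-verified Lean document; each statement's English description precedes it below -/
import Mathlib

section
/- For any type p with denominator n over an alphabet of size d, the size of the type class T_p^n satisfies (n+1)^{−d} · 2^{nH(p)} ≤ |T_p^n| ≤ 2^{nH(p)}. -/
/-!
The type class of `c` has `multinomial c = n! / ∏ₐ cₐ!` elements: expanding `(∑ₐ Xₐ)ⁿ` as a sum over
sequences `x : Fin n → A` shows that this is the coefficient of `∏ₐ Xₐ^cₐ`. For `p = c / n` one has
`2^(n H(p)) = nⁿ / ∏ₐ cₐ^cₐ`, so the claim becomes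
`multinomial c * ∏ₐ cₐ^cₐ ≤ nⁿ ≤ (n + 1)^d * multinomial c * ∏ₐ cₐ^cₐ`.
Both sides come from the multinomial expansion of `nⁿ = (∑ₐ cₐ)ⁿ`: the left-hand side is one of its
terms, and it is the largest of its at most `(n + 1)^d` terms, which reduces factor by factor to
`c! * c^k ≤ k! * c^c`.
-/

open Finset

open MvPolynomial in
theorem card_filter_card_fiber_eq_multinomial {ι A : Type*} [Fintype ι] [DecidableEq ι]
    [Fintype A] [DecidableEq A] (c : A → ℕ) (hc : ∑ a, c a = Fintype.card ι) :
    #{x : ι → A | ∀ a, #{i | x i = a} = c a} = Nat.multinomial univ c := by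
  have key := coeff_sum_X_pow_of_fintype (R := ℕ) (Finsupp.equivFunOnFinite.symm c)
    (Fintype.card ι)
  rw [Finsupp.sum_fintype _ _ fun _ => rfl, Finsupp.coe_equivFunOnFinite_symm, if_pos hc,
    Finsupp.multinomial_eq_of_support_subset (subset_univ _), Finsupp.coe_equivFunOnFinite_symm,
    Nat.cast_id] at key
  rw [← key, ← card_univ, ← prod_const, Fintype.prod_sum, coeff_sum, card_filter]
  refine sum_congr rfl fun x _ => ?_
  simp only [X, ← monomial_sum_one, coeff_monomial]
  congr 1
  simp only [Finsupp.ext_iff, Finsupp.coe_finsetSum, Finset.sum_apply, Finsupp.single_apply,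
    Finsupp.coe_equivFunOnFinite_symm, ← card_filter]

namespace Nat
open scoped Nat

theorem factorial_le_factorial_mul_pow_sub {a b : ℕ} (h : a ≤ b) : b ! ≤ a ! * b ^ (b - a) := by
  conv_lhs => rw [← factorial_mul_descFactorial (sub_le b a), Nat.sub_sub_self h]
  exact Nat.mul_le_mul_left _ (descFactorial_le_pow b _)

theorem factorial_mul_pow_le_factorial_mul_pow (c k : ℕ) : c ! * c ^ k ≤ k ! * c ^ c := by
  rcases le_total k c with h | h
  · calc c ! * c ^ k ≤ k ! * c ^ (c - k) * c ^ k :=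
          Nat.mul_le_mul_right _ (factorial_le_factorial_mul_pow_sub h)
      _ = k ! * c ^ c := by rw [mul_assoc, ← pow_add, Nat.sub_add_cancel h]
  · calc c ! * c ^ k = c ! * c ^ (k - c) * c ^ c := by
          rw [mul_assoc, ← pow_add, Nat.sub_add_cancel h]
      _ ≤ k ! * c ^ c := Nat.mul_le_mul_right _ (factorial_mul_pow_sub_le_factorial h)

theorem multinomial_mul_prod_pow_le {α : Type*} (s : Finset α) (c k : α → ℕ)
    (h : ∑ i ∈ s, k i = ∑ i ∈ s, c i) :
    multinomial s k * ∏ i ∈ s, c i ^ k i ≤ multinomial s c * ∏ i ∈ s, c i ^ c i := by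
  refine le_of_mul_le_mul_left ?_ (mul_pos (prod_factorial_pos s k) (prod_factorial_pos s c))
  calc (∏ i ∈ s, (k i)!) * (∏ i ∈ s, (c i)!) * (multinomial s k * ∏ i ∈ s, c i ^ k i)
      = ((∏ i ∈ s, (k i)!) * multinomial s k) * ∏ i ∈ s, (c i)! * c i ^ k i := by
        rw [prod_mul_distrib]; ring
    _ ≤ ((∏ i ∈ s, (c i)!) * multinomial s c) * ∏ i ∈ s, (k i)! * c i ^ c i := by
        rw [multinomial_spec, multinomial_spec, h]
        exact Nat.mul_le_mul_left _ (prod_le_prod (fun _ _ => Nat.zero_le _)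
          fun i _ => factorial_mul_pow_le_factorial_mul_pow (c i) (k i))
    _ = (∏ i ∈ s, (k i)!) * (∏ i ∈ s, (c i)!) * (multinomial s c * ∏ i ∈ s, c i ^ c i) := by
        rw [prod_mul_distrib]; ring

variable {α : Type*} [Fintype α] [DecidableEq α]

theorem multinomial_mul_prod_pow_self_le (c : α → ℕ) :
    multinomial univ c * ∏ i, c i ^ c i ≤ (∑ i, c i) ^ ∑ i, c i := by
  rw [sum_pow_eq_sum_piAntidiag]
  exact single_le_sum (f := fun k => multinomial univ k * ∏ i, c i ^ k i)
    (fun _ _ => Nat.zero_le _) (mem_piAntidiag.2 ⟨rfl, fun i _ => mem_univ i⟩)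

theorem pow_le_card_piAntidiag_mul (c : α → ℕ) :
    (∑ i, c i) ^ ∑ i, c i
      ≤ #(piAntidiag (univ : Finset α) (∑ i, c i)) * (multinomial univ c * ∏ i, c i ^ c i) := by
  rw [sum_pow_eq_sum_piAntidiag, ← smul_eq_mul]
  exact sum_le_card_nsmul _ _ _ fun k hk =>
    multinomial_mul_prod_pow_le univ c k (mem_piAntidiag.1 hk).1

end Nat

theorem Finset.card_piAntidiag_univ_le {α : Type*} [Fintype α] [DecidableEq α] (n : ℕ) :
    #(piAntidiag (univ : Finset α) n) ≤ (n + 1) ^ Fintype.card α := by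
  calc #(piAntidiag (univ : Finset α) n) ≤ #(Fintype.piFinset fun _ : α => range (n + 1)) := by
        refine card_le_card fun k hk => Fintype.mem_piFinset.2 fun a => mem_range_succ_iff.2 ?_
        rw [← (mem_piAntidiag.1 hk).1]
        exact single_le_sum (fun _ _ => Nat.zero_le _) (mem_univ a)
    _ = (n + 1) ^ Fintype.card α := by simp

namespace Real

theorem rpow_mul_mul_logb_div {b : ℝ} (hb : 0 < b) (hb₁ : b ≠ 1) {k n : ℕ} (h : k ≤ n) :
    b ^ ((n : ℝ) * ((k / n) * logb b (k / n))) = ((k : ℝ) / n) ^ k := by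
  rcases k.eq_zero_or_pos with rfl | hk
  · simp
  have hn : (n : ℝ) ≠ 0 := by exact_mod_cast (hk.trans_le h).ne'
  rw [← mul_assoc, mul_div_cancel₀ _ hn, mul_comm, rpow_mul hb.le,
    rpow_logb hb hb₁ (by positivity), rpow_natCast]

theorem rpow_mul_neg_sum_mul_logb {A : Type*} [Fintype A] {b : ℝ} (hb : 0 < b) (hb₁ : b ≠ 1)
    (n : ℕ) (c : A → ℕ) (hc : ∑ a, c a = n) :
    b ^ ((n : ℝ) * -∑ a, ((c a : ℝ) / n) * logb b ((c a : ℝ) / n))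
      = (n : ℝ) ^ n / ∏ a, (c a : ℝ) ^ c a := by
  have hle : ∀ a, c a ≤ n := fun a => hc ▸ single_le_sum (fun _ _ => Nat.zero_le _) (mem_univ a)
  rw [mul_neg, rpow_neg hb.le, mul_sum, rpow_sum_of_pos hb,
    prod_congr rfl fun a _ => rpow_mul_mul_logb_div hb hb₁ (hle a)]
  simp only [div_pow]
  rw [prod_div_distrib, prod_pow_eq_pow_sum, hc, inv_div]

end Real

theorem stmt3_general {A : Type*} [Fintype A] [DecidableEq A] (n : ℕ)
    (c : A → ℕ) (hc : ∑ a, c a = n) :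
    let d := Fintype.card A
    let H : ℝ := -∑ a, ((c a : ℝ) / n) * Real.logb 2 ((c a : ℝ) / n)
    let T := Finset.univ.filter
      (fun x : Fin n → A => ∀ a, (Finset.univ.filter (fun i => x i = a)).card = c a)
    (1 / ((n : ℝ) + 1) ^ d) * (2 : ℝ) ^ ((n : ℝ) * H) ≤ (T.card : ℝ) ∧
      (T.card : ℝ) ≤ (2 : ℝ) ^ ((n : ℝ) * H) := by
  intro d H T
  have hT : T.card = Nat.multinomial univ c :=
    card_filter_card_fiber_eq_multinomial c (by rw [hc, Fintype.card_fin])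
  have hH : (2 : ℝ) ^ ((n : ℝ) * H) = (n : ℝ) ^ n / ∏ a, (c a : ℝ) ^ c a :=
    Real.rpow_mul_neg_sum_mul_logb two_pos (by norm_num) n c hc
  have hP : (0 : ℝ) < ∏ a, (c a : ℝ) ^ c a := by
    exact_mod_cast prod_pos fun a _ => Nat.pow_self_pos
  have upper : Nat.multinomial univ c * ∏ a, c a ^ c a ≤ n ^ n :=
    hc ▸ Nat.multinomial_mul_prod_pow_self_le c
  have lower : n ^ n ≤ (n + 1) ^ d * (Nat.multinomial univ c * ∏ a, c a ^ c a) :=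
    hc ▸ (Nat.pow_le_card_piAntidiag_mul c).trans
      (Nat.mul_le_mul_right _ (card_piAntidiag_univ_le (∑ a, c a)))
  rw [hH, hT]
  constructor
  · rw [one_div_mul_eq_div, div_div, div_le_iff₀ (by positivity)]
    have lower_real := (Nat.cast_le (α := ℝ)).2 lower
    push_cast at lower_real
    linarith
  · rw [le_div_iff₀ hP]
    exact_mod_cast upper

theorem stmt3 {A : Type*} [Fintype A] [DecidableEq A] (n : ℕ) (hn : 0 < n)
    (c : A → ℕ) (hc : ∑ a, c a = n) :
    let d := Fintype.card A
    let H : ℝ := -∑ a, ((c a : ℝ) / n) * Real.logb 2 ((c a : ℝ) / n)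
    let T := Finset.univ.filter
      (fun x : Fin n → A => ∀ a, (Finset.univ.filter (fun i => x i = a)).card = c a)
    (1 / ((n : ℝ) + 1) ^ d) * (2 : ℝ) ^ ((n : ℝ) * H) ≤ (T.card : ℝ) ∧
      (T.card : ℝ) ≤ (2 : ℝ) ^ ((n : ℝ) * H) :=
  stmt3_general n c hc
end

section
/- Let p₁ ≥ p₂ ≥ ⋯ ≥ p_d > 0 be probabilities summing to 1, let L be an integer with 1/p₁ ≤ L ≤ d, and suppose t ∈ [p_d, p₁] satisfies L = ∑_{i=1}^d min{1, p_i/t}. Then, letting l* be the unique index with p_{l*−1} > t ≥ p_{l*} (with the convention p₀ = +∞), one has t·L = (L/(L−l*+1)) ∑_{i=l*}^d p_i, and consequently t·L = min_{l ∈ [1,L]} (L/(L−l+1)) ∑_{i=l}^d p_i. -/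
theorem stmt5 (d : ℕ) (hd : 1 ≤ d) (p : ℕ → ℝ)
    (hpos : ∀ i ∈ Finset.Icc 1 d, 0 < p i)
    (hsorted : ∀ i j, 1 ≤ i → i ≤ j → j ≤ d → p j ≤ p i)
    (hsum : ∑ i ∈ Finset.Icc 1 d, p i = 1)
    (L : ℕ) (hL0 : 1 ≤ L) (hL1 : 1 / p 1 ≤ (L : ℝ)) (hLd : L ≤ d)
    (t : ℝ) (ht1 : p d ≤ t) (ht2 : t ≤ p 1)
    (htL : (L : ℝ) = ∑ i ∈ Finset.Icc 1 d, min 1 (p i / t))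
    (lstar : ℕ) (hls1 : 1 ≤ lstar) (hlsd : lstar ≤ d)
    (hup : ∀ i, 1 ≤ i → i < lstar → t < p i)
    (hdn : p lstar ≤ t) :
    t * L = ((L : ℝ) / ((L : ℝ) - (lstar : ℝ) + 1)) * ∑ i ∈ Finset.Icc lstar d, p i ∧
    t * L = (Finset.Icc 1 L).inf' (Finset.nonempty_Icc.mpr hL0)
      (fun l => ((L : ℝ) / ((L : ℝ) - (l : ℝ) + 1)) * ∑ i ∈ Finset.Icc l d, p i) := by
  have ht0 : 0 < t := lt_of_lt_of_le (hpos d (Finset.mem_Icc.mpr ⟨hd, le_rfl⟩)) ht1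
  set S := ∑ i ∈ Finset.Icc lstar d, p i with hS
  have hSpos : 0 < S := Finset.sum_pos
    (fun i hi => hpos i (Finset.mem_Icc.mpr
      ⟨le_trans hls1 (Finset.mem_Icc.mp hi).1, (Finset.mem_Icc.mp hi).2⟩))
    (Finset.nonempty_Icc.mpr hlsd)
  -- generic splitting lemma
  have split : ∀ (f : ℕ → ℝ) (a m : ℕ), 1 ≤ a → a ≤ m → m ≤ d + 1 →
      ∑ i ∈ Finset.Icc a d, f i
        = (∑ i ∈ Finset.Icc a (m - 1), f i) + ∑ i ∈ Finset.Icc m d, f i := by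
    intro f a m ha ham hmd
    have e1 : Finset.Icc a d = Finset.Ioc (a - 1) d := by
      ext i; simp only [Finset.mem_Icc, Finset.mem_Ioc]; omega
    have e2 : Finset.Icc a (m - 1) = Finset.Ioc (a - 1) (m - 1) := by
      ext i; simp only [Finset.mem_Icc, Finset.mem_Ioc]; omega
    have e3 : Finset.Icc m d = Finset.Ioc (m - 1) d := by
      ext i; simp only [Finset.mem_Icc, Finset.mem_Ioc]; omega
    rw [e1, e2, e3]
    exact (Finset.sum_Ioc_consecutive f (by omega) (by omega)).symm
  -- rewrite htL
  have hsplitL := split (fun i => min 1 (p i / t)) 1 lstar le_rfl hls1 (by omega)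
  have hsum1 : ∑ i ∈ Finset.Icc 1 (lstar - 1), min 1 (p i / t) = (lstar : ℝ) - 1 := by
    have h1 : ∀ i ∈ Finset.Icc 1 (lstar - 1), min 1 (p i / t) = 1 := by
      intro i hi
      obtain ⟨hi1, hi2⟩ := Finset.mem_Icc.mp hi
      have : t < p i := hup i hi1 (by omega)
      have : (1 : ℝ) ≤ p i / t := (one_le_div ht0).mpr this.le
      exact min_eq_left this
    rw [Finset.sum_congr rfl h1, Finset.sum_const, Nat.card_Icc]
    have : lstar - 1 + 1 - 1 = lstar - 1 := by omega
    rw [this, nsmul_eq_mul, mul_one]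
    rw [Nat.cast_sub hls1, Nat.cast_one]
  have hsum2 : ∑ i ∈ Finset.Icc lstar d, min 1 (p i / t) = S / t := by
    have h2 : ∀ i ∈ Finset.Icc lstar d, min 1 (p i / t) = p i / t := by
      intro i hi
      obtain ⟨hi1, hi2⟩ := Finset.mem_Icc.mp hi
      have : p i ≤ t := le_trans (hsorted lstar i hls1 hi1 hi2) hdn
      exact min_eq_right ((div_le_one ht0).mpr this)
    rw [Finset.sum_congr rfl h2, ← Finset.sum_div]
  have hkey' : (L : ℝ) = ((lstar : ℝ) - 1) + S / t := by
    rw [htL, hsplitL, hsum1, hsum2]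
  have hkey : t * ((L : ℝ) - lstar + 1) = S := by
    field_simp at hkey'
    nlinarith [hkey']
  have hkeypos : 0 < (L : ℝ) - lstar + 1 := by nlinarith [hkey, hSpos, ht0]
  have hlsL : lstar ≤ L := by
    have h1 : (lstar : ℝ) < (L : ℝ) + 1 := by linarith
    have h2 : (lstar : ℝ) < ((L + 1 : ℕ) : ℝ) := by push_cast; linarith
    exact Nat.lt_succ_iff.mp (by exact_mod_cast h2)
  have part1 : t * L = ((L : ℝ) / ((L : ℝ) - (lstar : ℝ) + 1)) * S := by
    rw [← hkey]; field_simp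
  refine ⟨part1, ?_⟩
  have hLpos : (0 : ℝ) < L := by exact_mod_cast hL0
  apply le_antisymm
  · apply Finset.le_inf'
    intro l hl
    obtain ⟨hl1, hlL⟩ := Finset.mem_Icc.mp hl
    have hlLr : (l : ℝ) ≤ L := by exact_mod_cast hlL
    have klpos : 0 < (L : ℝ) - l + 1 := by linarith
    have hineq : t * ((L : ℝ) - l + 1) ≤ ∑ i ∈ Finset.Icc l d, p i := by
      rcases le_or_gt l lstar with hcase | hcase
      · rw [split p l lstar hl1 hcase (by omega)]
        have hcard : ((lstar : ℝ) - l) * t ≤ ∑ i ∈ Finset.Icc l (lstar - 1), p i := by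
          have hb := Finset.card_nsmul_le_sum (Finset.Icc l (lstar - 1)) p t
            (fun i hi => (hup i (le_trans hl1 (Finset.mem_Icc.mp hi).1)
              (by have := (Finset.mem_Icc.mp hi).2; omega)).le)
          have hc : (Finset.Icc l (lstar - 1)).card = lstar - l := by
            rw [Nat.card_Icc]; omega
          rw [hc, nsmul_eq_mul] at hb
          have hcast : ((lstar - l : ℕ) : ℝ) = (lstar : ℝ) - l := Nat.cast_sub hcase
          linarith [hcast ▸ hb]
        linarith [hkey, hcard]
      · have hsplit2 := split p lstar l hls1 hcase.le (by omega)
        have hcard : ∑ i ∈ Finset.Icc lstar (l - 1), p i ≤ ((l : ℝ) - lstar) * t := by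
          have hb := Finset.sum_le_card_nsmul (Finset.Icc lstar (l - 1)) p t
            (fun i hi => le_trans (hsorted lstar i hls1 (Finset.mem_Icc.mp hi).1
              (le_trans (Finset.mem_Icc.mp hi).2 (by omega))) hdn)
          have hc : (Finset.Icc lstar (l - 1)).card = l - lstar := by
            rw [Nat.card_Icc]; omega
          rw [hc, nsmul_eq_mul] at hb
          have hcast : ((l - lstar : ℕ) : ℝ) = (l : ℝ) - lstar := Nat.cast_sub hcase.le
          linarith [hcast ▸ hb]
        linarith [hkey, hcard, hsplit2]
    calc t * L = (L : ℝ) / ((L : ℝ) - l + 1) * (t * ((L : ℝ) - l + 1)) := by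
          field_simp
      _ ≤ (L : ℝ) / ((L : ℝ) - l + 1) * ∑ i ∈ Finset.Icc l d, p i :=
          mul_le_mul_of_nonneg_left hineq (by positivity)
  · have hmem : lstar ∈ Finset.Icc 1 L := Finset.mem_Icc.mpr ⟨hls1, hlsL⟩
    calc (Finset.Icc 1 L).inf' (Finset.nonempty_Icc.mpr hL0)
          (fun l => ((L : ℝ) / ((L : ℝ) - (l : ℝ) + 1)) * ∑ i ∈ Finset.Icc l d, p i)
        ≤ ((L : ℝ) / ((L : ℝ) - (lstar : ℝ) + 1)) * S := Finset.inf'_le _ hmem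
      _ = t * L := part1.symm
end

section
/- Let 𝒫 be a convex subset of ℝⁿ, S : 𝒫 → ℝ continuous, and T : 𝒫 → ℝ strictly concave. Suppose T attains its maximum on 𝒫 at q₂ with S(q₂) = x₂, and that min_{q ∈ 𝒫} S(q) = x₁. Then the function R(x) = max_{q : S(q) = x} T(q) is strictly monotone increasing on [x₁, x₂]. -/
theorem stmt7 {n : ℕ} (P : Set (Fin n → ℝ)) (hP : Convex ℝ P)
    (S T : (Fin n → ℝ) → ℝ) (hS : ContinuousOn S P)
    (hT : StrictConcaveOn ℝ P T)
    (q₂ : Fin n → ℝ) (hq₂ : q₂ ∈ P) (hmax : ∀ q ∈ P, T q ≤ T q₂)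
    (x₁ x₂ : ℝ) (hx₂ : S q₂ = x₂) (hx₁ : IsLeast (S '' P) x₁)
    (R : ℝ → ℝ)
    (hR : ∀ x ∈ Set.Icc x₁ x₂, IsGreatest (T '' {q | q ∈ P ∧ S q = x}) (R x)) :
    StrictMonoOn R (Set.Icc x₁ x₂) := by
  intro a ha b hb hab
  obtain ⟨⟨qa, ⟨hqaP, hqaS⟩, hqaT⟩, _⟩ := hR a ha
  obtain ⟨_, hRb_ub⟩ := hR b hb
  have hqa_ne : qa ≠ q₂ := by
    intro h
    rw [h, hx₂] at hqaS
    have := hb.2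
    linarith
  -- T qa < T q₂ by uniqueness of the max of a strictly concave function
  have hTlt : T qa < T q₂ := by
    rcases lt_or_eq_of_le (hmax qa hqaP) with h | h
    · exact h
    · exfalso
      have hmem : (1/2 : ℝ) • qa + (1/2 : ℝ) • q₂ ∈ P :=
        hP hqaP hq₂ (by norm_num) (by norm_num) (by norm_num)
      have := hT.2 hqaP hq₂ hqa_ne (by norm_num : (0:ℝ) < 1/2)
        (by norm_num : (0:ℝ) < 1/2) (by norm_num)
      have := hmax _ hmem
      simp only [smul_eq_mul] at *
      linarith
  -- IVT on the segment from qa to q₂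
  set f : ℝ → ℝ := fun t => S ((1 - t) • qa + t • q₂) with hf
  have hseg : ∀ t ∈ Set.Icc (0:ℝ) 1, (1 - t) • qa + t • q₂ ∈ P := fun t ht =>
    hP hqaP hq₂ (by linarith [ht.2]) ht.1 (by ring)
  have hfc : ContinuousOn f (Set.Icc 0 1) := by
    apply hS.comp
    · exact (Continuous.continuousOn (by continuity))
    · intro t ht; exact hseg t ht
  have hf0 : f 0 = a := by simp [hf, hqaS]
  have hf1 : f 1 = x₂ := by simp [hf, hx₂]
  have hbmem : b ∈ Set.Icc (f 0) (f 1) := by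
    rw [hf0, hf1]; exact ⟨le_of_lt hab, hb.2⟩
  obtain ⟨t, ht01, hft⟩ := intermediate_value_Icc (by norm_num : (0:ℝ) ≤ 1) hfc hbmem
  have hq'P : (1 - t) • qa + t • q₂ ∈ P := hseg t ht01
  have hRb_ge : T ((1 - t) • qa + t • q₂) ≤ R b :=
    hRb_ub ⟨_, ⟨hq'P, hft⟩, rfl⟩
  have ht0 : t ≠ 0 := by
    intro h
    rw [h] at hft
    simp [hf, hqaS] at hft
    linarith
  rcases lt_or_eq_of_le ht01.2 with ht1 | ht1
  · -- 0 < t < 1 : strict concavity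
    have := hT.2 hqaP hq₂ hqa_ne (by linarith : (0:ℝ) < 1 - t)
      (lt_of_le_of_ne ht01.1 (Ne.symm ht0)) (by ring)
    simp only [smul_eq_mul] at this
    have hTqa : (1 - t) * T qa + t * T q₂ ≥ T qa := by nlinarith [ht01.1, hmax qa hqaP]
    calc R a = T qa := hqaT.symm
      _ < T ((1 - t) • qa + t • q₂) := by linarith
      _ ≤ R b := hRb_ge
  · -- t = 1 : point is q₂
    subst ht1
    simp only [sub_self, zero_smul, one_smul, zero_add] at hRb_ge
    calc R a = T qa := hqaT.symm
      _ < T q₂ := hTlt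
      _ ≤ R b := hRb_ge
end

section
/- Let 𝒫 be a convex subset of ℝⁿ, S : 𝒫 → ℝ continuous, and U : 𝒫 → ℝ strictly convex. Suppose U attains its minimum on 𝒫 at q₂ with S(q₂) = x₂, and min_{q∈𝒫} S(q) = x₁. Then Q(x) = min_{q : S(q) = x} U(q) is strictly monotone decreasing on [x₁, x₂]. -/
theorem stmt8 {n : ℕ} (P : Set (Fin n → ℝ)) (hP : Convex ℝ P)
    (S U : (Fin n → ℝ) → ℝ) (hS : ContinuousOn S P)
    (hU : StrictConvexOn ℝ P U)
    (q₂ : Fin n → ℝ) (hq₂ : q₂ ∈ P) (hmin : ∀ q ∈ P, U q₂ ≤ U q)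
    (x₁ x₂ : ℝ) (hx₂ : S q₂ = x₂) (hx₁ : IsLeast (S '' P) x₁)
    (Q : ℝ → ℝ)
    (hQ : ∀ x ∈ Set.Icc x₁ x₂, IsLeast (U '' {q | q ∈ P ∧ S q = x}) (Q x)) :
    StrictAntiOn Q (Set.Icc x₁ x₂) := by
  -- q₂ is the unique minimizer
  have key : ∀ q ∈ P, q ≠ q₂ → U q₂ < U q := by
    intro q hq hne
    have h1 : U q₂ ≤ U q := hmin q hq
    have hstrict := hU.2 hq hq₂ hne (by norm_num : (0:ℝ) < 1/2)
      (by norm_num : (0:ℝ) < 1/2) (by norm_num)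
    have hm : (1/2 : ℝ) • q + (1/2 : ℝ) • q₂ ∈ P :=
      hP hq hq₂ (by norm_num) (by norm_num) (by norm_num)
    have h2 := hmin _ hm
    by_contra h
    push_neg at h
    simp only [smul_eq_mul] at hstrict
    linarith
  intro x hx y hy hxy
  obtain ⟨hQxmem, hQxle⟩ := hQ x hx
  obtain ⟨hQymem, hQyle⟩ := hQ y hy
  obtain ⟨qx, ⟨hqxP, hqxS⟩, hQx⟩ := hQxmem
  have hylex₂ : y ≤ x₂ := hy.2
  have hqxne : qx ≠ q₂ := by
    intro h
    rw [h, hx₂] at hqxS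
    linarith
  -- IVT on the segment from qx to q₂
  set g : ℝ → (Fin n → ℝ) := fun t => (1 - t) • qx + t • q₂ with hg
  have hgcont : Continuous g := by
    apply Continuous.add
    · exact (continuous_const.sub continuous_id).smul continuous_const
    · exact continuous_id.smul continuous_const
  have hgmem : ∀ t ∈ Set.Icc (0:ℝ) 1, g t ∈ P := by
    intro t ht
    exact hP hqxP hq₂ (by linarith [ht.2]) ht.1 (by ring)
  have hfcont : ContinuousOn (S ∘ g) (Set.Icc 0 1) :=
    hS.comp hgcont.continuousOn hgmem
  have hf0 : (S ∘ g) 0 = x := by simp [hg, hqxS]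
  have hf1 : (S ∘ g) 1 = x₂ := by simp [hg, hx₂]
  have hyIcc : y ∈ Set.Icc ((S ∘ g) 0) ((S ∘ g) 1) := by
    rw [hf0, hf1]; exact ⟨le_of_lt hxy, hylex₂⟩
  obtain ⟨t, ht, hft⟩ := intermediate_value_Icc (by norm_num : (0:ℝ) ≤ 1) hfcont hyIcc
  have hqP : g t ∈ P := hgmem t ht
  have hQyleU : Q y ≤ U (g t) := hQyle ⟨g t, ⟨hqP, hft⟩, rfl⟩
  -- show U (g t) < U qx = Q x
  have hmain : U (g t) < U qx := by
    rcases eq_or_lt_of_le ht.1 with h0 | h0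
    · -- t = 0: g t = qx, S = x ≠ y, contradiction
      exfalso
      have : g t = qx := by simp [hg, ← h0]
      rw [Function.comp_apply, this, hqxS] at hft
      linarith
    rcases eq_or_lt_of_le ht.2 with h1 | h1
    · -- t = 1: g t = q₂
      have : g t = q₂ := by simp [hg, h1]
      rw [this]
      exact key qx hqxP hqxne
    · have hstrict := hU.2 hqxP hq₂ hqxne (by linarith : (0:ℝ) < 1 - t) h0 (by ring)
      have := hmin qx hqxP
      calc U (g t) < (1 - t) * U qx + t * U q₂ := hstrict
        _ ≤ (1 - t) * U qx + t * U qx := by nlinarith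
        _ = U qx := by ring
  rw [← hQx]
  linarith
end

section
/- Let p be a strictly positive probability distribution, h(s) the tilted distribution h_i(s) = p_i^s/∑_j p_j^s, and q any probability distribution with D(q‖p) = D(h(s)‖p). Then for s ≠ 1: H(h(s)) − H(q) = (1/(1−s)) D(q ‖ h(s)). In particular, if s > 1 then H(h(s)) ≤ H(q), and if 0 < s < 1 then H(h(s)) ≥ H(q). -/
theorem stmt11 (d : ℕ) (p : Fin d → ℝ) (hpos : ∀ i, 0 < p i) (hsum : ∑ i, p i = 1)
    (s : ℝ) (hs : s ≠ 1)
    (q : Fin d → ℝ) (hq0 : ∀ i, 0 ≤ q i) (hq1 : ∑ i, q i = 1)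
    (hD : ∑ i, q i * Real.logb 2 (q i / p i) =
      ∑ i, (p i ^ s / ∑ j, p j ^ s) * Real.logb 2 ((p i ^ s / ∑ j, p j ^ s) / p i)) :
    let h : Fin d → ℝ := fun i => p i ^ s / ∑ j, p j ^ s
    (-∑ i, h i * Real.logb 2 (h i)) - (-∑ i, q i * Real.logb 2 (q i)) =
      (1 / (1 - s)) * ∑ i, q i * Real.logb 2 (q i / h i) ∧
    (1 < s → (-∑ i, h i * Real.logb 2 (h i)) ≤ -∑ i, q i * Real.logb 2 (q i)) ∧
    (0 < s → s < 1 → (-∑ i, q i * Real.logb 2 (q i)) ≤ -∑ i, h i * Real.logb 2 (h i)) := by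
  intro h
  have hd : d ≠ 0 := by rintro rfl; simp at hsum
  haveI : Nonempty (Fin d) := Fin.pos_iff_nonempty.mp (Nat.pos_of_ne_zero hd)
  have hZ : 0 < ∑ j, p j ^ s :=
    Finset.sum_pos (fun j _ => Real.rpow_pos_of_pos (hpos j) s) Finset.univ_nonempty
  have hh : ∀ i, 0 < h i := fun i => div_pos (Real.rpow_pos_of_pos (hpos i) s) hZ
  have hsumh : ∑ i, h i = 1 := by
    show ∑ i, p i ^ s / (∑ j, p j ^ s) = 1
    rw [← Finset.sum_div, div_self hZ.ne']
  have hs1 : (1:ℝ) - s ≠ 0 := sub_ne_zero.mpr (Ne.symm hs)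
  have logh : ∀ i, Real.logb 2 (h i)
      = s * Real.logb 2 (p i) - Real.logb 2 (∑ j, p j ^ s) := by
    intro i
    show Real.logb 2 (p i ^ s / ∑ j, p j ^ s) = _
    simp only [Real.logb]
    rw [Real.log_div (Real.rpow_pos_of_pos (hpos i) s).ne' hZ.ne',
        Real.log_rpow (hpos i)]
    ring
  set Hq := ∑ i, q i * Real.logb 2 (q i) with hHq
  set Aq := ∑ i, q i * Real.logb 2 (p i) with hAqdef
  set Hh := ∑ i, h i * Real.logb 2 (h i) with hHh
  set Ah := ∑ i, h i * Real.logb 2 (p i) with hAhdef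
  set lZ := Real.logb 2 (∑ j, p j ^ s) with hlZdef
  have hD' : ∑ i, q i * Real.logb 2 (q i / p i) = ∑ i, h i * Real.logb 2 (h i / p i) := hD
  have eq2 : ∑ i, q i * Real.logb 2 (q i / p i) = Hq - Aq := by
    rw [hHq, hAqdef, ← Finset.sum_sub_distrib]
    refine Finset.sum_congr rfl fun i _ => ?_
    rcases eq_or_lt_of_le (hq0 i) with h0 | h0
    · simp [← h0]
    · rw [Real.logb_div h0.ne' (hpos i).ne']; ring
  have eq3 : ∑ i, h i * Real.logb 2 (h i / p i) = Hh - Ah := by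
    rw [hHh, hAhdef, ← Finset.sum_sub_distrib]
    refine Finset.sum_congr rfl fun i _ => ?_
    rw [Real.logb_div (hh i).ne' (hpos i).ne']; ring
  have eq4 : Hh = s * Ah - lZ := by
    have e : Hh = ∑ i, (s * (h i * Real.logb 2 (p i)) - h i * lZ) := by
      rw [hHh]
      refine Finset.sum_congr rfl fun i _ => ?_
      rw [logh i]; ring
    rw [e, Finset.sum_sub_distrib, ← Finset.mul_sum, ← Finset.sum_mul, hsumh, ← hAhdef]
    ring
  have eq5 : ∑ i, q i * Real.logb 2 (q i / h i) = Hq - s * Aq + lZ := by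
    have e : ∑ i, q i * Real.logb 2 (q i / h i)
        = ∑ i, (q i * Real.logb 2 (q i) - (s * (q i * Real.logb 2 (p i)) - q i * lZ)) := by
      refine Finset.sum_congr rfl fun i _ => ?_
      rcases eq_or_lt_of_le (hq0 i) with h0 | h0
      · simp [← h0]
      · rw [Real.logb_div h0.ne' (hh i).ne', logh i]; ring
    rw [e, Finset.sum_sub_distrib, Finset.sum_sub_distrib, ← Finset.mul_sum,
        ← Finset.sum_mul, hq1, ← hHq, ← hAqdef]
    ring
  rw [eq2, eq3] at hD'
  have hAq : Aq = Hq - Hh + Ah := by linarith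
  have hlZ : lZ = s * Ah - Hh := by linarith
  have gibbs : 0 ≤ ∑ i, q i * Real.logb 2 (q i / h i) := by
    have hlog2 : (0:ℝ) < Real.log 2 := Real.log_pos one_lt_two
    have key : ∀ i ∈ Finset.univ, q i - h i ≤ q i * Real.log (q i / h i) := by
      intro i _
      rcases eq_or_lt_of_le (hq0 i) with h0 | h0
      · rw [← h0]; simp; linarith [hh i]
      · have hx : 0 < h i / q i := div_pos (hh i) h0
        have hle := Real.log_le_sub_one_of_pos hx
        have hlog : Real.log (q i / h i) = - Real.log (h i / q i) := by
          rw [← Real.log_inv, inv_div]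
        rw [hlog]
        have hm : q i * (1 - h i / q i) ≤ q i * (- Real.log (h i / q i)) := by
          apply mul_le_mul_of_nonneg_left _ h0.le; linarith
        calc q i - h i = q i * (1 - h i / q i) := by field_simp
          _ ≤ _ := hm
    have hsumle : 0 ≤ ∑ i, q i * Real.log (q i / h i) := by
      have hss := Finset.sum_le_sum key
      rw [Finset.sum_sub_distrib, hq1, hsumh] at hss
      linarith
    have e : ∑ i, q i * Real.logb 2 (q i / h i)
        = (∑ i, q i * Real.log (q i / h i)) / Real.log 2 := by
      rw [Finset.sum_div]
      refine Finset.sum_congr rfl fun i _ => ?_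
      rw [Real.logb]; ring
    rw [e]
    positivity
  have goal1 : -Hh - -Hq = 1 / (1 - s) * ∑ i, q i * Real.logb 2 (q i / h i) := by
    rw [eq5, hAq, hlZ]
    field_simp
    ring
  refine ⟨goal1, fun hs2 => ?_, fun hs3 hs4 => ?_⟩
  · have hfrac : 1 / (1 - s) < 0 := div_neg_of_pos_of_neg one_pos (by linarith)
    have := mul_nonpos_of_nonpos_of_nonneg hfrac.le gibbs
    linarith [goal1]
  · have hfrac : 0 < 1 / (1 - s) := div_pos one_pos (by linarith)
    have := mul_nonneg hfrac.le gibbs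
    linarith [goal1]
end

section
/- Let p be a strictly positive probability distribution on {1,…,d}, and for r ∈ (0, −log₂ p₁) (with p₁ = max p_i) define E(r) = min over probability distributions q with D(q‖p) ≤ r of D(q‖p) + H(q). Then E(r) = sup_{s ≥ 1} (r + ψ(s))/(1−s), where ψ(s) = log₂ ∑_i p_i^s. -/
/-!
For `s > 1` the tilted distribution `p_s ∝ p^s` satisfies
`D(q‖p_s) = D(q‖p) + (s - 1) C(q) + ψ(s)`, where `C(q) = D(q‖p) + H(q)` is the cross entropy
`-∑ q_i log₂ p_i`. Gibbs' inequality `D(q‖p_s) ≥ 0` then gives `(r + ψ(s)) / (1 - s) ≤ C(q)` for every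
feasible `q`. Conversely `C(p_s) = (D(p_s‖p) + ψ(s)) / (1 - s)`, and `s ↦ D(p_s‖p)` is continuous
and vanishes at `s = 1`: either it reaches `r` at some `s > 1`, where equality holds, or it stays
below `r` for large `s`, where the gap `(r - D(p_s‖p)) / (s - 1)` is arbitrarily small.
-/

open Real Finset

theorem csInf_eq_csSup_of_forall_le_of_forall_pos_le_add {A B : Set ℝ}
    (hBA : ∀ a ∈ A, ∀ b ∈ B, b ≤ a) (hgap : ∀ ε > 0, ∃ a ∈ A, ∃ b ∈ B, a ≤ b + ε) :
    sInf A = sSup B := by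
  obtain ⟨a₀, ha₀, b₀, hb₀, -⟩ := hgap 1 one_pos
  have hA : BddBelow A := ⟨b₀, fun a ha => hBA a ha b₀ hb₀⟩
  have hB : BddAbove B := ⟨a₀, fun b hb => hBA a₀ ha₀ b hb⟩
  refine le_antisymm (le_of_forall_pos_le_add fun ε hε => ?_)
    (csSup_le ⟨b₀, hb₀⟩ fun b hb => le_csInf ⟨a₀, ha₀⟩ fun a ha => hBA a ha b hb)
  obtain ⟨a, ha, b, hb, hab⟩ := hgap ε hε
  calc sInf A ≤ a := csInf_le hA ha
    _ ≤ b + ε := hab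
    _ ≤ sSup B + ε := by gcongr; exact le_csSup hB hb

theorem sub_le_mul_log_div {x y : ℝ} (hx : 0 ≤ x) (hy : 0 < y) : x - y ≤ x * log (x / y) := by
  have h := mul_le_mul_of_nonneg_left (self_sub_one_le_mul_log (div_nonneg hx hy.le)) hy.le
  rwa [mul_sub, mul_one, ← mul_assoc, mul_div_cancel₀ _ hy.ne'] at h

variable {ι : Type*} [Fintype ι]

noncomputable def relEntropy (q p : ι → ℝ) : ℝ := ∑ i, q i * logb 2 (q i / p i)

noncomputable def crossEntropy (q p : ι → ℝ) : ℝ := ∑ i, q i * -logb 2 (p i)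

noncomputable def powerSum (p : ι → ℝ) (s : ℝ) : ℝ := ∑ i, p i ^ s

noncomputable def tilt (p : ι → ℝ) (s : ℝ) (i : ι) : ℝ := p i ^ s / powerSum p s

section
variable {q p : ι → ℝ}

theorem relEntropy_nonneg (hq : ∀ i, 0 ≤ q i) (hp : ∀ i, 0 < p i)
    (hpq : ∑ i, p i ≤ ∑ i, q i) : 0 ≤ relEntropy q p := by
  have hlog : ∑ i, (q i - p i) ≤ ∑ i, q i * log (q i / p i) :=
    sum_le_sum fun i _ => sub_le_mul_log_div (hq i) (hp i)
  rw [sum_sub_distrib] at hlog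
  have hrel : relEntropy q p = (∑ i, q i * log (q i / p i)) / log 2 := by
    simp only [relEntropy, logb, sum_div, mul_div_assoc]
  rw [hrel]
  exact div_nonneg (by linarith) (log_nonneg one_le_two)

theorem relEntropy_self (p : ι → ℝ) : relEntropy p p = 0 := by
  refine sum_eq_zero fun i _ => ?_
  rcases eq_or_ne (p i) 0 with h | h <;> simp [h]

theorem relEntropy_add_neg_entropy (hp : ∀ i, p i ≠ 0) :
    relEntropy q p + -∑ i, q i * logb 2 (q i) = crossEntropy q p := by
  rw [relEntropy, crossEntropy, ← sum_neg_distrib, ← sum_add_distrib]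
  refine sum_congr rfl fun i _ => ?_
  rcases eq_or_ne (q i) 0 with h | h
  · simp [h]
  · rw [logb_div h (hp i)]
    ring

theorem tilt_one (hsum : ∑ i, p i = 1) : tilt p 1 = p := by
  ext i
  simp [tilt, powerSum, hsum]

end

section
variable [Nonempty ι] {q p : ι → ℝ}

theorem powerSum_pos (hp : ∀ i, 0 < p i) (s : ℝ) : 0 < powerSum p s :=
  sum_pos (fun i _ => rpow_pos_of_pos (hp i) s) univ_nonempty

theorem tilt_pos (hp : ∀ i, 0 < p i) (s : ℝ) (i : ι) : 0 < tilt p s i :=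
  div_pos (rpow_pos_of_pos (hp i) s) (powerSum_pos hp s)

theorem sum_tilt (hp : ∀ i, 0 < p i) (s : ℝ) : ∑ i, tilt p s i = 1 := by
  simp only [tilt, ← sum_div]
  exact div_self (powerSum_pos hp s).ne'

theorem relEntropy_tilt (hp : ∀ i, 0 < p i) (hq : ∑ i, q i = 1) (s : ℝ) :
    relEntropy q (tilt p s) =
      relEntropy q p + (s - 1) * crossEntropy q p + logb 2 (powerSum p s) := by
  have hterm : ∀ i, q i * logb 2 (q i / tilt p s i) =
      q i * logb 2 (q i / p i) + (s - 1) * (q i * -logb 2 (p i)) +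
        q i * logb 2 (powerSum p s) := by
    intro i
    rcases eq_or_ne (q i) 0 with h | h
    · simp [h]
    · have hps := rpow_pos_of_pos (hp i) s
      rw [tilt, logb_div h (div_pos hps (powerSum_pos hp s)).ne',
        logb_div hps.ne' (powerSum_pos hp s).ne', logb_rpow_eq_mul_logb_of_pos (hp i),
        logb_div h (hp i).ne']
      ring
  simp only [relEntropy, crossEntropy, sum_congr rfl fun i _ => hterm i, sum_add_distrib,
    ← mul_sum, ← sum_mul, hq, one_mul]

theorem crossEntropy_tilt (hp : ∀ i, 0 < p i) {s : ℝ} (hs : s ≠ 1) :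
    crossEntropy (tilt p s) p =
      (relEntropy (tilt p s) p + logb 2 (powerSum p s)) / (1 - s) := by
  have h := relEntropy_tilt (q := tilt p s) hp (sum_tilt hp s) s
  rw [relEntropy_self] at h
  rw [eq_div_iff (sub_ne_zero.mpr hs.symm)]
  linarith

theorem div_one_sub_le_crossEntropy (hp : ∀ i, 0 < p i) (hq : ∀ i, 0 ≤ q i)
    (hq1 : ∑ i, q i = 1) {r s : ℝ} (hs : 1 < s) (hr : relEntropy q p ≤ r) :
    (r + logb 2 (powerSum p s)) / (1 - s) ≤ crossEntropy q p := by
  have h := relEntropy_nonneg hq (tilt_pos hp s) ((sum_tilt hp s).trans hq1.symm).le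
  rw [relEntropy_tilt hp hq1] at h
  rw [div_le_iff_of_neg (by linarith)]
  linarith

theorem continuous_relEntropy_tilt (hp : ∀ i, 0 < p i) :
    Continuous fun s => relEntropy (tilt p s) p := by
  have hpow : ∀ i, Continuous fun s : ℝ => p i ^ s := fun i =>
    continuous_const_rpow (hp i).ne'
  have htilt : ∀ i, Continuous fun s => tilt p s i := fun i =>
    (hpow i).div (continuous_finsetSum _ fun j _ => hpow j) fun s => (powerSum_pos hp s).ne'
  exact continuous_finsetSum _ fun i _ => (htilt i).mul
    (((htilt i).div_const _).logb fun s => (div_pos (tilt_pos hp s i) (hp i)).ne')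

end

theorem exists_tilt_near_optimal [Nonempty ι] {p : ι → ℝ} (hp : ∀ i, 0 < p i)
    (hsum : ∑ i, p i = 1) {r ε : ℝ} (hr : 0 < r) (hε : 0 < ε) :
    ∃ s, 1 < s ∧ relEntropy (tilt p s) p ≤ r ∧
      crossEntropy (tilt p s) p ≤ (r + logb 2 (powerSum p s)) / (1 - s) + ε := by
  have h₁ : relEntropy (tilt p 1) p = 0 := by rw [tilt_one hsum, relEntropy_self]
  set S := 1 + r / ε
  have hS : 1 < S := by simp only [S]; linarith [div_pos hr hε]
  by_cases hSr : relEntropy (tilt p S) p ≤ r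
  · -- the gap `(r - D(tilt p S ‖ p)) / (S - 1)` is at most `r / (S - 1) = ε`
    refine ⟨S, hS, hSr, ?_⟩
    have h₀ : 0 ≤ relEntropy (tilt p S) p :=
      relEntropy_nonneg (tilt_pos hp S · |>.le) hp (hsum.trans (sum_tilt hp S).symm).le
    rw [crossEntropy_tilt hp hS.ne', div_le_iff_of_neg (by linarith), add_mul,
      div_mul_cancel₀ _ (by linarith)]
    have hε' : ε * (1 - S) = -r := by simp only [S]; field_simp; ring
    linarith
  · obtain ⟨t, ⟨ht₁, -⟩, htr⟩ := intermediate_value_Icc hS.le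
      (continuous_relEntropy_tilt hp).continuousOn ⟨h₁ ▸ hr.le, (not_le.mp hSr).le⟩
    have ht : 1 < t := ht₁.lt_of_ne (by rintro rfl; linarith)
    refine ⟨t, ht, htr.le, ?_⟩
    rw [crossEntropy_tilt hp ht.ne', show relEntropy (tilt p t) p = r from htr]
    linarith

theorem stmt14_general (d : ℕ) (p : Fin d → ℝ) (hpos : ∀ i, 0 < p i) (hsum : ∑ i, p i = 1)
    (p1 : ℝ)
    (r : ℝ) (hr : r ∈ Set.Ioo 0 (-Real.logb 2 p1)) :
    sInf {x : ℝ | ∃ q : Fin d → ℝ, (∀ i, 0 ≤ q i) ∧ (∑ i, q i = 1) ∧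
        (∑ i, q i * Real.logb 2 (q i / p i)) ≤ r ∧
        x = (∑ i, q i * Real.logb 2 (q i / p i)) + (-∑ i, q i * Real.logb 2 (q i))} =
      sSup {y : ℝ | ∃ s : ℝ, 1 < s ∧
        y = (r + Real.logb 2 (∑ i, p i ^ s)) / (1 - s)} := by
  have : Nonempty (Fin d) := by
    rcases isEmpty_or_nonempty (Fin d) with h | h
    · simp at hsum
    · exact h
  have hp0 : ∀ i, p i ≠ 0 := fun i => (hpos i).ne'
  apply csInf_eq_csSup_of_forall_le_of_forall_pos_le_add
  · rintro _ ⟨q, hq, hq1, hqr, rfl⟩ _ ⟨s, hs, rfl⟩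
    change _ ≤ relEntropy q p + _
    rw [relEntropy_add_neg_entropy hp0]
    exact div_one_sub_le_crossEntropy hpos hq hq1 hs hqr
  · intro ε hε
    obtain ⟨s, hs, hsr, hgap⟩ := exists_tilt_near_optimal hpos hsum hr.1 hε
    refine ⟨_, ⟨tilt p s, (tilt_pos hpos s · |>.le), sum_tilt hpos s, hsr, rfl⟩,
      _, ⟨s, hs, rfl⟩, ?_⟩
    change relEntropy _ p + _ ≤ _
    rwa [relEntropy_add_neg_entropy hp0]

theorem stmt14 (d : ℕ) (p : Fin d → ℝ) (hpos : ∀ i, 0 < p i) (hsum : ∑ i, p i = 1)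
    (p1 : ℝ) (hp1 : IsGreatest (Set.range p) p1)
    (r : ℝ) (hr : r ∈ Set.Ioo 0 (-Real.logb 2 p1)) :
    sInf {x : ℝ | ∃ q : Fin d → ℝ, (∀ i, 0 ≤ q i) ∧ (∑ i, q i = 1) ∧
        (∑ i, q i * Real.logb 2 (q i / p i)) ≤ r ∧
        x = (∑ i, q i * Real.logb 2 (q i / p i)) + (-∑ i, q i * Real.logb 2 (q i))} =
      sSup {y : ℝ | ∃ s : ℝ, 1 < s ∧
        y = (r + Real.logb 2 (∑ i, p i ^ s)) / (1 - s)} :=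
  stmt14_general d p hpos hsum p1 r hr
end

section
/- Let 0 ≤ β ≤ ε ≤ 1 and 0 ≤ δ ≤ 1 satisfy √δ·√β + √(1−δ)·√(1−β) ≥ 1 − ε. Then √δ ≤ √β + √(2ε); in particular √δ ≤ (1+√2)√ε and δ ≤ 6ε. -/
theorem stmt18 (β ε δ : ℝ) (hβ0 : 0 ≤ β) (hβε : β ≤ ε) (hε1 : ε ≤ 1)
    (hδ0 : 0 ≤ δ) (hδ1 : δ ≤ 1)
    (h : 1 - ε ≤ Real.sqrt δ * Real.sqrt β + Real.sqrt (1 - δ) * Real.sqrt (1 - β)) :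
    Real.sqrt δ ≤ Real.sqrt β + Real.sqrt (2 * ε) ∧
    Real.sqrt δ ≤ (1 + Real.sqrt 2) * Real.sqrt ε ∧
    δ ≤ 6 * ε := by
  have hε0 : 0 ≤ ε := le_trans hβ0 hβε
  have hβ1 : β ≤ 1 := le_trans hβε hε1
  set a := Real.sqrt δ with hadef
  set b := Real.sqrt β with hbdef
  set c := Real.sqrt (1 - δ) with hcdef
  set d := Real.sqrt (1 - β) with hddef
  have ha0 : 0 ≤ a := Real.sqrt_nonneg _
  have hb0 : 0 ≤ b := Real.sqrt_nonneg _
  have ha : a ^ 2 = δ := Real.sq_sqrt hδ0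
  have hb : b ^ 2 = β := Real.sq_sqrt hβ0
  have hc : c ^ 2 = 1 - δ := Real.sq_sqrt (by linarith)
  have hd : d ^ 2 = 1 - β := Real.sq_sqrt (by linarith)
  have key : (a - b) ^ 2 ≤ 2 * ε := by nlinarith [sq_nonneg (c - d)]
  have h1 : a ≤ b + Real.sqrt (2 * ε) := by
    have := Real.sqrt_le_sqrt key
    rw [Real.sqrt_sq_eq_abs] at this
    have := le_trans (le_abs_self (a - b)) this
    linarith
  have hbε : b ≤ Real.sqrt ε := Real.sqrt_le_sqrt hβε
  have h2e : Real.sqrt (2 * ε) = Real.sqrt 2 * Real.sqrt ε :=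
    Real.sqrt_mul (by norm_num) ε
  have h2 : a ≤ (1 + Real.sqrt 2) * Real.sqrt ε := by
    rw [h2e] at h1; nlinarith
  have hs2 : Real.sqrt 2 ≤ 1.5 := by
    rw [show (1.5 : ℝ) = Real.sqrt (1.5 ^ 2) by rw [Real.sqrt_sq]; norm_num]
    exact Real.sqrt_le_sqrt (by norm_num)
  have hse : Real.sqrt ε ^ 2 = ε := Real.sq_sqrt hε0
  have hse0 : 0 ≤ Real.sqrt ε := Real.sqrt_nonneg _
  have hs20 : 0 ≤ Real.sqrt 2 := Real.sqrt_nonneg _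
  have h3 : δ ≤ 6 * ε := by nlinarith
  exact ⟨h1, h2, h3⟩
end
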